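/- arXiv:2003.05742 — 4 statements merged into one kernel-verified Lean document; each statement's English description precedes it below -/
import Mathlib

section
/- The function M(κ) = (κ² − 1 + √(1 − κ²/2)) / (1 − √(1 − κ²/2)) is strictly decreasing on (0, √2), with M(κ) → 3 as κ → 0⁺ and M(κ) → 1 as κ → √2⁻. In particular 1 < M(κ) < 3 on (0, √2). -/
lemma sfb_key (κ : ℝ) (h0 : 0 < κ) (h2 : κ < Real.sqrt 2) :
    (κ ^ 2 - 1 + Real.sqrt (1 - κ ^ 2 / 2)) / (1 - Real.sqrt (1 - κ ^ 2 / 2))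
      = 1 + 2 * Real.sqrt (1 - κ ^ 2 / 2) := by
  have hκ2 : κ ^ 2 < 2 := (Real.lt_sqrt h0.le).mp h2
  set s := Real.sqrt (1 - κ ^ 2 / 2) with hs
  have hs2 : s ^ 2 = 1 - κ ^ 2 / 2 := Real.sq_sqrt (by linarith)
  have hs0 : 0 ≤ s := Real.sqrt_nonneg _
  have hs1 : s < 1 := by
    have := Real.sqrt_lt_sqrt (by linarith : (0:ℝ) ≤ 1 - κ ^ 2 / 2)
      (by nlinarith : 1 - κ ^ 2 / 2 < 1)
    simpa using this
  have hnum : κ ^ 2 - 1 + s = (1 + 2 * s) * (1 - s) := by nlinarith [hs2]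
  rw [hnum, mul_div_assoc, div_self (by linarith : (1:ℝ) - s ≠ 0), mul_one]

/-- M(κ) = (κ² − 1 + √(1 − κ²/2)) / (1 − √(1 − κ²/2)) is strictly decreasing on
(0, √2), with M → 3 as κ → 0⁺ and M → 1 as κ → √2⁻; in particular 1 < M < 3 on (0, √2). -/
theorem stmt_7 (M : ℝ → ℝ)
    (hM : ∀ κ, M κ = (κ ^ 2 - 1 + Real.sqrt (1 - κ ^ 2 / 2)) / (1 - Real.sqrt (1 - κ ^ 2 / 2))) :
    StrictAntiOn M (Set.Ioo 0 (Real.sqrt 2)) ∧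
    Filter.Tendsto M (nhdsWithin 0 (Set.Ioi 0)) (nhds 3) ∧
    Filter.Tendsto M (nhdsWithin (Real.sqrt 2) (Set.Iio (Real.sqrt 2))) (nhds 1) ∧
    ∀ κ ∈ Set.Ioo 0 (Real.sqrt 2), 1 < M κ ∧ M κ < 3 := by
  have hM' : ∀ κ ∈ Set.Ioo 0 (Real.sqrt 2), M κ = 1 + 2 * Real.sqrt (1 - κ ^ 2 / 2) := by
    intro κ hκ
    rw [hM κ, sfb_key κ hκ.1 hκ.2]
  have h2 : (0:ℝ) < Real.sqrt 2 := Real.sqrt_pos.mpr (by norm_num)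
  have hcont : Filter.Tendsto (fun κ : ℝ => 1 + 2 * Real.sqrt (1 - κ ^ 2 / 2)) =
      Filter.Tendsto (fun κ : ℝ => 1 + 2 * Real.sqrt (1 - κ ^ 2 / 2)) := rfl
  refine ⟨?_, ?_, ?_, ?_⟩
  · intro a ha b hb hab
    rw [hM' a ha, hM' b hb]
    have ha2 : a ^ 2 < b ^ 2 := by nlinarith [ha.1, hb.1]
    have hb2 : b ^ 2 < 2 := (Real.lt_sqrt hb.1.le).mp hb.2
    have := Real.sqrt_lt_sqrt (by linarith : (0:ℝ) ≤ 1 - b ^ 2 / 2)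
      (by linarith : 1 - b ^ 2 / 2 < 1 - a ^ 2 / 2)
    linarith
  · have h1 : Filter.Tendsto (fun κ : ℝ => 1 + 2 * Real.sqrt (1 - κ ^ 2 / 2))
        (nhds 0) (nhds 3) := by
      have : Continuous (fun κ : ℝ => 1 + 2 * Real.sqrt (1 - κ ^ 2 / 2)) := by
        continuity
      have h := this.tendsto 0
      rw [show (3:ℝ) = 1 + 2 by norm_num]
      simpa using h
    refine (Filter.Tendsto.congr' ?_ (h1.mono_left nhdsWithin_le_nhds))
    filter_upwards [Ioo_mem_nhdsGT_of_mem (by simp [h2.le, h2] : (0:ℝ) ∈ Set.Ico (0:ℝ) (Real.sqrt 2))] with κ hκ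
    exact (hM' κ hκ).symm
  · have h1 : Filter.Tendsto (fun κ : ℝ => 1 + 2 * Real.sqrt (1 - κ ^ 2 / 2))
        (nhds (Real.sqrt 2)) (nhds 1) := by
      have hc : Continuous (fun κ : ℝ => 1 + 2 * Real.sqrt (1 - κ ^ 2 / 2)) := by
        continuity
      have := hc.tendsto (Real.sqrt 2)
      have h22 : Real.sqrt 2 ^ 2 = 2 := Real.sq_sqrt (by norm_num)
      simpa [h22] using this
    refine (Filter.Tendsto.congr' ?_ (h1.mono_left nhdsWithin_le_nhds))
    filter_upwards [Ioo_mem_nhdsLT_of_mem (by simp [h2] : Real.sqrt 2 ∈ Set.Ioc (0:ℝ) (Real.sqrt 2))] with κ hκ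
    exact (hM' κ hκ).symm
  · intro κ hκ
    rw [hM' κ hκ]
    have hκ2 : κ ^ 2 < 2 := (Real.lt_sqrt hκ.1.le).mp hκ.2
    have hs0 : 0 < Real.sqrt (1 - κ ^ 2 / 2) := Real.sqrt_pos.mpr (by linarith)
    have hs1 : Real.sqrt (1 - κ ^ 2 / 2) < 1 := by
      have := Real.sqrt_lt_sqrt (by linarith : (0:ℝ) ≤ 1 - κ ^ 2 / 2)
        (by nlinarith [hκ.1] : 1 - κ ^ 2 / 2 < 1)
      simpa using this
    constructor <;> linarith
end

section
/- The unique κ ∈ (0, √2) satisfying κ² − 1 = √(1 − κ²/2) is κ = √(3/2). Consequently, the real-valued amplitude a(x,0) of the SFB vanishes at its minimizer (where cos(κ r₀ √(γ/β) x) = −1) if and only if κ ≤ √(3/2); i.e. the critical wavenumber for wave dislocation is κ_crit = √(3/2). -/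
/-! With u = κ², squaring turns u − 1 = √(1 − u/2) into u(u − 3/2) = 0 with u ≥ 1, and
|u − 1| ≤ √(1 − u/2) into u(u − 3/2) ≤ 0. Since cos(ωx) sweeps out [−1, 1] when ω ≠ 0,
c + s cos(ωx) has a zero iff |c| ≤ s. -/

open Real Set

lemma sub_one_eq_sqrt_one_sub_half_iff (u : ℝ) : u - 1 = √(1 - u / 2) ↔ u = 3 / 2 := by
  constructor
  · intro h
    have hu : 1 ≤ u := by linarith [h ▸ sqrt_nonneg (1 - u / 2)]
    rcases le_or_gt u 2 with hu2 | hu2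
    · have hsq : (u - 1) ^ 2 = 1 - u / 2 := by rw [h, sq_sqrt (by linarith)]
      nlinarith
    · rw [sqrt_eq_zero_of_nonpos (by linarith)] at h
      linarith
  · rintro rfl
    rw [show (1 : ℝ) - 3 / 2 / 2 = (1 / 2) ^ 2 by norm_num, sqrt_sq (by norm_num)]
    norm_num

lemma abs_sub_one_le_sqrt_one_sub_half_iff {u : ℝ} (hu : 0 ≤ u) :
    |u - 1| ≤ √(1 - u / 2) ↔ u ≤ 3 / 2 := by
  rcases le_or_gt u 2 with hu2 | hu2
  · rw [le_sqrt (abs_nonneg _) (by linarith), sq_abs]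
    constructor <;> intro h <;> nlinarith
  · rw [sqrt_eq_zero_of_nonpos (by linarith)]
    constructor <;> intro h
    · linarith [le_abs_self (u - 1)]
    · linarith

lemma exists_add_mul_cos_mul_eq_zero_iff {c s ω : ℝ} (hs : 0 ≤ s) (hω : ω ≠ 0) :
    (∃ x, c + s * cos (ω * x) = 0) ↔ |c| ≤ s := by
  have hrange : range (fun x ↦ cos (ω * x)) = Icc (-1) 1 := by
    rw [← range_cos]
    exact (mul_left_surjective₀ hω).range_comp cos
  have hcos : (∃ x, c + s * cos (ω * x) = 0) ↔ ∃ t ∈ Icc (-1 : ℝ) 1, c + s * t = 0 := by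
    rw [← hrange, exists_range_iff]
  rw [hcos]
  constructor
  · rintro ⟨t, ht, hct⟩
    calc |c| = s * |t| := by rw [eq_neg_of_add_eq_zero_left hct, abs_neg, abs_mul, abs_of_nonneg hs]
      _ ≤ s * 1 := mul_le_mul_of_nonneg_left (abs_le.2 ht) hs
      _ = s := mul_one s
  · intro hc
    rcases hs.eq_or_lt with rfl | hs
    · exact ⟨0, by norm_num, by simpa using hc⟩
    · refine ⟨-c / s, ?_, by field_simp; ring⟩
      rw [mem_Icc, le_div_iff₀ hs, div_le_iff₀ hs]
      constructor <;> linarith [abs_le.1 hc]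

/-- The unique κ ∈ (0, √2) with κ² − 1 = √(1 − κ²/2) is κ = √(3/2); consequently
the SFB amplitude a(x,0) has a zero iff κ ≤ √(3/2): κ_crit = √(3/2). -/
theorem stmt_9 (β γ r₀ : ℝ) (hβ : 0 < β) (hγ : 0 < γ) (hr : 0 < r₀) :
    (∀ κ ∈ Set.Ioo 0 (Real.sqrt 2),
      (κ ^ 2 - 1 = Real.sqrt (1 - κ ^ 2 / 2) ↔ κ = Real.sqrt (3 / 2))) ∧
    (∀ κ ∈ Set.Ioo 0 (Real.sqrt 2),
      ((∃ x : ℝ, κ ^ 2 - 1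
          + Real.sqrt (1 - κ ^ 2 / 2) * Real.cos (κ * r₀ * Real.sqrt (γ / β) * x) = 0) ↔
        κ ≤ Real.sqrt (3 / 2))) := by
  constructor
  · rintro κ ⟨hκ, -⟩
    rw [sub_one_eq_sqrt_one_sub_half_iff, @eq_comm _ κ, sqrt_eq_iff_eq_sq (by norm_num) hκ.le, eq_comm]
  · rintro κ ⟨hκ, -⟩
    have hω : κ * r₀ * √(γ / β) ≠ 0 := by positivity
    rw [exists_add_mul_cos_mul_eq_zero_iff (sqrt_nonneg _) hω,
      abs_sub_one_le_sqrt_one_sub_half_iff (sq_nonneg κ), le_sqrt hκ.le (by norm_num)]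
end

section
/- For 0 < κ < √(3/2), the amplitude a(x,0) = |κ² − 1 + √(1 − κ²/2)·cos(θ(x))| / (1 − √(1 − κ²/2)·cos(θ(x))) (with θ(x) = κ r₀ √(γ/β) x and r₀ = 1) has zeros, namely at x where cos(θ(x)) = (1 − κ²)/√(1 − κ²/2), and this value lies in [−1, 1]. -/
open Real Set

-- With `t = κ²`, this is `(1 - t)² ≤ 1 - t / 2`, i.e. `t (t - 3/2) ≤ 0`.
lemma one_sub_div_sqrt_one_sub_half_mem_Icc {t : ℝ} (ht₀ : 0 ≤ t) (ht : t ≤ 3 / 2) :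
    (1 - t) / √(1 - t / 2) ∈ Icc (-1 : ℝ) 1 := by
  have hpos : 0 < √(1 - t / 2) := sqrt_pos.2 (by linarith)
  refine abs_le.1 ?_
  rw [abs_div, abs_of_pos hpos, div_le_one hpos]
  exact abs_le_sqrt (by nlinarith)

lemma exists_cos_mul_eq {ω c : ℝ} (hω : ω ≠ 0) (hc : c ∈ Icc (-1 : ℝ) 1) :
    ∃ x, cos (ω * x) = c :=
  ⟨arccos c / ω, by rw [mul_div_cancel₀ _ hω, cos_arccos hc.1 hc.2]⟩

/-- For 0 < κ < √(3/2), the SFB amplitude a(x,0) (with r₀ = 1) has zeros, namely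
where cos(θ(x)) = (1 − κ²)/√(1 − κ²/2), and this value lies in [−1, 1]. -/
theorem stmt_10 (β γ κ : ℝ) (hβ : 0 < β) (hγ : 0 < γ)
    (h₁ : 0 < κ) (h₂ : κ < Real.sqrt (3 / 2)) :
    (1 - κ ^ 2) / Real.sqrt (1 - κ ^ 2 / 2) ∈ Set.Icc (-1 : ℝ) 1 ∧
    ∃ x : ℝ, Real.cos (κ * Real.sqrt (γ / β) * x) = (1 - κ ^ 2) / Real.sqrt (1 - κ ^ 2 / 2) ∧
      |κ ^ 2 - 1 + Real.sqrt (1 - κ ^ 2 / 2) * Real.cos (κ * Real.sqrt (γ / β) * x)| /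
        (1 - Real.sqrt (1 - κ ^ 2 / 2) * Real.cos (κ * Real.sqrt (γ / β) * x)) = 0 := by
  have hκ : κ ^ 2 < 3 / 2 := (lt_sqrt h₁.le).1 h₂
  have hmem := one_sub_div_sqrt_one_sub_half_mem_Icc (sq_nonneg κ) hκ.le
  obtain ⟨x, hx⟩ := exists_cos_mul_eq (by positivity : κ * √(γ / β) ≠ 0) hmem
  have hsqrt : √(1 - κ ^ 2 / 2) ≠ 0 := (sqrt_pos.2 (by linarith)).ne'
  refine ⟨hmem, x, hx, ?_⟩
  rw [hx, mul_div_cancel₀ _ hsqrt]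
  simp
end

section
/- The SFB for κ = 1, ψ(ξ,τ) = (cos ξ − i√2 sinh τ)/(√2 cosh τ − cos ξ) · e^{−iτ}, satisfies the normalized focusing NLS equation ∂ψ/∂τ + i ∂²ψ/∂ξ² + i|ψ|²ψ = 0. -/
open Complex

noncomputable def sfb1 (ξ τ : ℝ) : ℂ :=
  (((Real.cos ξ : ℂ) - I * Real.sqrt 2 * Real.sinh τ) /
    ((Real.sqrt 2 * Real.cosh τ : ℝ) - (Real.cos ξ : ℝ) : ℝ)) * Complex.exp (-I * τ)

lemma D_pos (ξ τ : ℝ) : 0 < Real.sqrt 2 * Real.cosh τ - Real.cos ξ := by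
  have h1 : (1:ℝ) < Real.sqrt 2 := by
    rw [show (1:ℝ) = Real.sqrt 1 from Real.sqrt_one.symm]
    exact Real.sqrt_lt_sqrt (by norm_num) (by norm_num)
  nlinarith [Real.one_le_cosh τ, Real.cos_le_one ξ]

lemma Dc_ne (ξ τ : ℝ) : ((Real.sqrt 2 : ℂ) * Real.cosh τ - Real.cos ξ) ≠ 0 := by
  have h := (D_pos ξ τ).ne'
  intro hc
  apply h
  have h2 : ((Real.sqrt 2 * Real.cosh τ - Real.cos ξ : ℝ) : ℂ) = 0 := by
    rw [Complex.ofReal_sub, Complex.ofReal_mul]; exact hc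
  exact_mod_cast h2

lemma sfb1_eq (ξ τ : ℝ) : sfb1 ξ τ =
    ((Real.cos ξ : ℂ) - I * Real.sqrt 2 * Real.sinh τ) /
      ((Real.sqrt 2 : ℂ) * Real.cosh τ - Real.cos ξ) * Complex.exp (-I * τ) := by
  rw [sfb1]; push_cast; ring_nf

noncomputable def Fx (ξ τ : ℝ) : ℂ :=
  (-(Real.sin ξ) * ((Real.sqrt 2 : ℂ) * Real.cosh τ - I * Real.sqrt 2 * Real.sinh τ)) /
    ((Real.sqrt 2 : ℂ) * Real.cosh τ - Real.cos ξ) ^ 2 * Complex.exp (-I * τ)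

lemma hFx (ξ τ : ℝ) : HasDerivAt (fun ξ' => sfb1 ξ' τ) (Fx ξ τ) ξ := by
  have hc : HasDerivAt (fun y : ℝ => ((Real.cos y : ℝ) : ℂ)) (↑(-Real.sin ξ)) ξ :=
    (Real.hasDerivAt_cos ξ).ofReal_comp
  have hne := Dc_ne ξ τ
  have h1 := ((hc.sub_const (I * Real.sqrt 2 * Real.sinh τ)).div
    (((hasDerivAt_const ξ ((Real.sqrt 2 : ℂ) * Real.cosh τ)).sub hc)) hne).mul_const
    (Complex.exp (-I * τ))
  have heq : (fun ξ' => sfb1 ξ' τ) = fun ξ' =>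
      ((Real.cos ξ' : ℂ) - I * Real.sqrt 2 * Real.sinh τ) /
        ((Real.sqrt 2 : ℂ) * Real.cosh τ - Real.cos ξ') * Complex.exp (-I * τ) := by
    funext ξ'; exact sfb1_eq ξ' τ
  rw [heq]
  refine h1.congr_deriv ?_
  symm
  simp only [Pi.sub_apply, Pi.mul_apply, Pi.div_apply]
  rw [Fx]
  field_simp
  push_cast
  ring

noncomputable def Fxx (ξ τ : ℝ) : ℂ :=
  -((Real.cos ξ : ℂ) * ((Real.sqrt 2 : ℂ) * Real.cosh τ - Real.cos ξ) - 2 * (Real.sin ξ : ℂ) ^ 2) *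
      ((Real.sqrt 2 : ℂ) * Real.cosh τ - I * Real.sqrt 2 * Real.sinh τ) /
    ((Real.sqrt 2 : ℂ) * Real.cosh τ - Real.cos ξ) ^ 3 * Complex.exp (-I * τ)

lemma hFxx (ξ τ : ℝ) : HasDerivAt (fun ξ' => Fx ξ' τ) (Fxx ξ τ) ξ := by
  have hc : HasDerivAt (fun y : ℝ => ((Real.cos y : ℝ) : ℂ)) (↑(-Real.sin ξ)) ξ :=
    (Real.hasDerivAt_cos ξ).ofReal_comp
  have hs : HasDerivAt (fun y : ℝ => ((Real.sin y : ℝ) : ℂ)) (↑(Real.cos ξ)) ξ :=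
    (Real.hasDerivAt_sin ξ).ofReal_comp
  have hne := Dc_ne ξ τ
  have hne2 : (((Real.sqrt 2 : ℂ) * Real.cosh τ - Real.cos ξ) *
      ((Real.sqrt 2 : ℂ) * Real.cosh τ - Real.cos ξ)) ≠ 0 := mul_ne_zero hne hne
  have hnum : HasDerivAt (fun y : ℝ => -((Real.sin y : ℝ) : ℂ) *
      ((Real.sqrt 2 : ℂ) * Real.cosh τ - I * Real.sqrt 2 * Real.sinh τ))
      (-((Real.cos ξ : ℝ) : ℂ) *
      ((Real.sqrt 2 : ℂ) * Real.cosh τ - I * Real.sqrt 2 * Real.sinh τ)) ξ :=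
    hs.neg.mul_const _
  have hd := (hasDerivAt_const ξ ((Real.sqrt 2 : ℂ) * Real.cosh τ)).sub hc
  have hden := hd.mul hd
  have h1 := (hnum.div hden hne2).mul_const (Complex.exp (-I * τ))
  have heq : (fun ξ' => Fx ξ' τ) = fun ξ' =>
      (-(Real.sin ξ' : ℂ) * ((Real.sqrt 2 : ℂ) * Real.cosh τ - I * Real.sqrt 2 * Real.sinh τ)) /
        (((Real.sqrt 2 : ℂ) * Real.cosh τ - Real.cos ξ') *
          ((Real.sqrt 2 : ℂ) * Real.cosh τ - Real.cos ξ')) * Complex.exp (-I * τ) := by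
    funext ξ'; rw [Fx]; ring
  rw [heq]
  refine h1.congr_deriv ?_
  symm
  simp only [Pi.sub_apply, Pi.mul_apply, Pi.div_apply]
  rw [Fxx, div_mul_eq_mul_div, div_mul_eq_mul_div,
    div_eq_div_iff (pow_ne_zero 3 hne) (pow_ne_zero 2 hne2)]
  push_cast
  ring

noncomputable def Ft (ξ τ : ℝ) : ℂ :=
  ((-(I * Real.sqrt 2 * Real.cosh τ) * ((Real.sqrt 2 : ℂ) * Real.cosh τ - Real.cos ξ)
      - ((Real.cos ξ : ℂ) - I * Real.sqrt 2 * Real.sinh τ) * (Real.sqrt 2 * Real.sinh τ)) /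
        ((Real.sqrt 2 : ℂ) * Real.cosh τ - Real.cos ξ) ^ 2
    - I * ((Real.cos ξ : ℂ) - I * Real.sqrt 2 * Real.sinh τ) /
        ((Real.sqrt 2 : ℂ) * Real.cosh τ - Real.cos ξ)) * Complex.exp (-I * τ)

lemma hFt (ξ τ : ℝ) : HasDerivAt (fun τ' => sfb1 ξ τ') (Ft ξ τ) τ := by
  have hsh : HasDerivAt (fun y : ℝ => ((Real.sinh y : ℝ) : ℂ)) (↑(Real.cosh τ)) τ :=
    (Real.hasDerivAt_sinh τ).ofReal_comp
  have hch : HasDerivAt (fun y : ℝ => ((Real.cosh y : ℝ) : ℂ)) (↑(Real.sinh τ)) τ :=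
    (Real.hasDerivAt_cosh τ).ofReal_comp
  have hne := Dc_ne ξ τ
  have hNum := (hasDerivAt_const τ ((Real.cos ξ : ℝ) : ℂ)).sub
    (hsh.const_mul (I * (Real.sqrt 2 : ℂ)))
  have hDen := (hch.const_mul ((Real.sqrt 2 : ℂ))).sub_const ((Real.cos ξ : ℝ) : ℂ)
  have hE : HasDerivAt (fun y : ℝ => Complex.exp (-I * y))
      (Complex.exp (-I * τ) * (-I * 1)) τ :=
    (((hasDerivAt_id τ).ofReal_comp).const_mul (-I)).cexp
  have h1 := (hNum.div hDen hne).mul hE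
  have heq : (fun τ' => sfb1 ξ τ') = fun τ' =>
      ((Real.cos ξ : ℂ) - I * (Real.sqrt 2:ℂ) * Real.sinh τ') /
        ((Real.sqrt 2 : ℂ) * Real.cosh τ' - Real.cos ξ) * Complex.exp (-I * τ') := by
    funext τ'; exact sfb1_eq ξ τ'
  rw [heq]
  refine h1.congr_deriv ?_
  symm
  simp only [Pi.sub_apply, Pi.mul_apply, Pi.div_apply]
  rw [Ft]
  field_simp
  ring

lemma absSq (ξ τ : ℝ) : ((‖sfb1 ξ τ‖ : ℂ)) ^ 2 =
    ((Real.cos ξ : ℂ) ^ 2 + 2 * (Real.sinh τ : ℂ) ^ 2) /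
      ((Real.sqrt 2 * Real.cosh τ - Real.cos ξ : ℝ) : ℂ) ^ 2 := by
  have hpos := D_pos ξ τ
  rw [sfb1]
  have h1 : ‖Complex.exp (-I * τ)‖ = 1 := by
    rw [Complex.norm_exp]; simp
  rw [norm_mul, norm_div, h1, mul_one]
  rw [Complex.norm_real, Real.norm_eq_abs, abs_of_pos hpos]
  have hN : ‖(Real.cos ξ : ℂ) - I * Real.sqrt 2 * Real.sinh τ‖ ^ 2
      = Real.cos ξ ^ 2 + 2 * Real.sinh τ ^ 2 := by
    have hr : Real.sqrt 2 * Real.sqrt 2 = 2 := Real.mul_self_sqrt (by norm_num)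
    generalize Real.cos ξ = a
    generalize Real.sinh τ = b
    rw [Complex.sq_norm, Complex.normSq_apply]
    simp
    nlinarith [hr]
  have hR : (‖(Real.cos ξ : ℂ) - I * Real.sqrt 2 * Real.sinh τ‖
      / (Real.sqrt 2 * Real.cosh τ - Real.cos ξ)) ^ 2
      = (Real.cos ξ ^ 2 + 2 * Real.sinh τ ^ 2) / (Real.sqrt 2 * Real.cosh τ - Real.cos ξ) ^ 2 := by
    rw [div_pow, hN]
  calc (((‖(Real.cos ξ : ℂ) - I * Real.sqrt 2 * Real.sinh τ‖
        / (Real.sqrt 2 * Real.cosh τ - Real.cos ξ) : ℝ)) : ℂ) ^ 2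
      = (((‖(Real.cos ξ : ℂ) - I * Real.sqrt 2 * Real.sinh τ‖
        / (Real.sqrt 2 * Real.cosh τ - Real.cos ξ)) ^ 2 : ℝ) : ℂ) := by push_cast; ring
    _ = (((Real.cos ξ ^ 2 + 2 * Real.sinh τ ^ 2) / (Real.sqrt 2 * Real.cosh τ - Real.cos ξ) ^ 2 : ℝ) : ℂ) := by
        rw [hR]
    _ = _ := by push_cast; ring

/-- The SFB for κ = 1 satisfies the normalized focusing NLS equation
ψ_τ + iψ_ξξ + i|ψ|²ψ = 0. -/
theorem stmt_14 :
    ∀ ξ τ : ℝ,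
      deriv (fun τ' => sfb1 ξ τ') τ
        + I * deriv (fun ξ' => deriv (fun ξ'' => sfb1 ξ'' τ) ξ') ξ
        + I * (‖sfb1 ξ τ‖ : ℂ) ^ 2 * sfb1 ξ τ = 0 := by
  intro ξ τ
  have hder : deriv (fun ξ'' => sfb1 ξ'' τ) = fun ξ' => Fx ξ' τ :=
    funext fun ξ' => (hFx ξ' τ).deriv
  rw [(hFt ξ τ).deriv, hder, (hFxx ξ τ).deriv, absSq, sfb1_eq, Ft, Fxx]
  have hne := Dc_ne ξ τ
  have hcast : ((Real.sqrt 2 * Real.cosh τ - Real.cos ξ : ℝ) : ℂ)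
      = (Real.sqrt 2 : ℂ) * Real.cosh τ - Real.cos ξ := by push_cast [Complex.ofReal_cos]; norm_num
  rw [hcast]
  have hr : ((Real.sqrt 2 : ℝ) : ℂ) ^ 2 = 2 := by
    rw [← Complex.ofReal_pow, Real.sq_sqrt (by norm_num : (0:ℝ) ≤ 2)]; norm_num
  have hI : (I : ℂ) ^ 2 = -1 := Complex.I_sq
  have hs2 : ((Real.sin ξ : ℝ) : ℂ) ^ 2 = 1 - ((Real.cos ξ : ℝ) : ℂ) ^ 2 := by
    have h := Real.sin_sq_add_cos_sq ξ
    have : (Real.sin ξ : ℝ) ^ 2 = 1 - (Real.cos ξ : ℝ) ^ 2 := by linarith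
    exact_mod_cast congrArg (fun x : ℝ => (x : ℂ)) this
  have hsh2 : ((Real.sinh τ : ℝ) : ℂ) ^ 2 = ((Real.cosh τ : ℝ) : ℂ) ^ 2 - 1 := by
    have h := Real.cosh_sq_sub_sinh_sq τ
    have : (Real.sinh τ : ℝ) ^ 2 = (Real.cosh τ : ℝ) ^ 2 - 1 := by linarith
    exact_mod_cast congrArg (fun x : ℝ => (x : ℂ)) this
  set c : ℂ := ((Real.cos ξ : ℝ) : ℂ) with hc
  set s : ℂ := ((Real.sin ξ : ℝ) : ℂ) with hsv
  set ch : ℂ := ((Real.cosh τ : ℝ) : ℂ) with hchv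
  set sh : ℂ := ((Real.sinh τ : ℝ) : ℂ) with hshv
  set r : ℂ := ((Real.sqrt 2 : ℝ) : ℂ) with hrv
  set E : ℂ := Complex.exp (-I * τ) with hE
  field_simp
  linear_combination E*((-1*r^1*ch^3*I^1) + (-1*ch^1*c^1*sh^1) + (1*r^1*ch^1*sh^2*I^1) + (1*r^1*ch^2*sh^1*I^2) + (-1*ch^1*c^1*sh^1*I^2) + (-1*c^1*sh^2*I^1)) * hr +
    E*((-2*r^1*sh^1*s^2) + (-1*r^1*c^2*sh^1) + (-2*r^1*sh^3) + (2*r^1*ch^2*sh^1) + (-2*ch^1*c^1*sh^1)) * hI +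
    E*((2*r^1*ch^1*I^1) + (2*r^1*sh^1)) * hs2 + E*((2*r^1*ch^1*I^1) + (2*r^1*sh^1)) * hsh2
end
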